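/- Assume β > 3 and α = 1/β. If w ∈ L^{α,β} and s(w) ∈ P^b ∖ {ε}, then ŵ ∈ L^{α,β} and s(ŵ) = ε. -/

import Mathlib

open Filter Topology MeasureTheory ENNReal
open scoped Classical

noncomputable section

namespace AB

/-- The (α,β)-transformation `T(x) = βx + α − ⌊βx + α⌋`. -/
def T (α β : ℝ) (x : ℝ) : ℝ := β * x + α - ⌊β * x + α⌋

/-- `λ = ⌈α+β⌉ − 1`, as a natural number. -/
def lamNat (α β : ℝ) : ℕ := (⌈α + β⌉ - 1).toNat

/-- The digit of `x ∈ [0,1)`: the index `k` with `x ∈ J_k`, namely `⌊βx + α⌋`. -/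
def digit (α β : ℝ) (x : ℝ) : ℕ := (⌊β * x + α⌋).toNat

/-- The (α,β)-expansion of `x`. -/
def iSeq (α β : ℝ) (x : ℝ) : ℕ → ℕ := fun n => digit α β ((T α β)^[n] x)

/-- The one-sided (α,β)-shift: closure (in the product topology) of the set of expansions. -/
def Xab (α β : ℝ) : Set (ℕ → ℕ) :=
  closure {s | ∃ x ∈ Set.Ico (0 : ℝ) 1, s = iSeq α β x}

/-- Word of given length read in a one-sided sequence starting at position `k`. -/
def wordN (s : ℕ → ℕ) (k len : ℕ) : List ℕ := (List.range len).map fun i => s (k + i)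

/-- The language of the (α,β)-shift: finite words appearing in points of `Xab`. -/
def Lang (α β : ℝ) : Set (List ℕ) :=
  {w | ∃ s ∈ Xab α β, ∃ k : ℕ, w = wordN s k w.length}

/-- `a = i_{α,β}(0)`. -/
def aSeq (α β : ℝ) : ℕ → ℕ := iSeq α β 0

/-- The prefix of length `l` of a sequence, as a word. -/
def pre (s : ℕ → ℕ) (l : ℕ) : List ℕ := (List.range l).map s

/-- Lexicographic (non-strict) order on words. -/
def wordLe (u v : List ℕ) : Prop := u = v ∨ List.Lex (· < ·) u v

/-- Lexicographic (non-strict) order on one-sided sequences. -/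
def seqLe (x y : ℕ → ℕ) : Prop :=
  x = y ∨ ∃ n : ℕ, (∀ i < n, x i = y i) ∧ x n < y n

/-- The largest `k ≤ |w|` such that the length-`k` suffix of `w` equals the length-`k`
prefix of `s` (this is `k1` for `s = a` and `k2` for `s = b`). -/
def kk (s : ℕ → ℕ) (w : List ℕ) : ℕ :=
  Nat.findGreatest (fun k => w.drop (w.length - k) = pre s k) w.length

/-- The set of finite prefixes of a sequence (`P^a`, `P^b`). -/
def Pset (s : ℕ → ℕ) : Set (List ℕ) := {u | ∃ l : ℕ, u = pre s l}

/-- The distinguished suffix `s(w)`. -/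
def sWord (a b : ℕ → ℕ) (w : List ℕ) : List ℕ :=
  if kk b w < kk a w then w.drop (w.length - kk a w)
  else if kk a w < kk b w then w.drop (w.length - kk b w)
  else []

/-- The hat operation on `P = P^a ∪ P^b` (for `β > 3`, `α = 1/β`). -/
def hatP (a b : ℕ → ℕ) (lam : ℕ) (u : List ℕ) : List ℕ :=
  if u = [] then []
  else if u ∈ Pset a then u.dropLast ++ [u.getLast?.getD 0 + 1]
  else if 3 ≤ u.getLast?.getD 0 then u.dropLast ++ [u.getLast?.getD 0 - 1]
  else
    (u.set (u.length - kk a u.dropLast - 2) (u.getD (u.length - kk a u.dropLast - 2) 0 - 1)).set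
      (u.length - kk a u.dropLast - 1) (lam - 1)

/-- `ŵ` for `w = v·s(w)`: replace the distinguished suffix by its hat. -/
def hatW (a b : ℕ → ℕ) (lam : ℕ) (w : List ℕ) : List ℕ :=
  w.take (w.length - (sWord a b w).length) ++ hatP a b lam (sWord a b w)

/-- `w̃`: the hat operation applied twice. -/
def tildeW (a b : ℕ → ℕ) (lam : ℕ) (w : List ℕ) : List ℕ :=
  hatW a b lam (hatW a b lam w)

/-- `z(u)` for `u ∈ P^b`. -/
def zP (a b : ℕ → ℕ) (u : List ℕ) : ℕ :=
  if u = [] then 0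
  else sSup ({k : ℕ | (u ++ pre (fun i => a (kk a u + i)) k) ∈ Pset b} ∪ {0})

/-- `z(w)` for a word `w` in the language. -/
def zW (a b : ℕ → ℕ) (w : List ℕ) : ℕ :=
  if kk a w < kk b w then zP a b (w.drop (w.length - kk b w)) else 0

/-- `z̄(n) = max{z(u) : u prefix of b, |u| ≤ n}`. -/
def zbar (a b : ℕ → ℕ) (n : ℕ) : ℕ :=
  (Finset.range (n + 1)).sup fun l => zP a b (pre b l)

/-- The natural extension `Σ^{α,β}`. -/
def SigmaAB (α β : ℝ) : Set (ℤ → ℕ) :=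
  {x | ∀ k : ℤ, (fun n : ℕ => x (k + n)) ∈ Xab α β}

/-- `σ^j` on two-sided sequences. -/
def shiftI {A : Type*} (j : ℤ) (x : ℤ → A) : ℤ → A := fun n => x (n + j)

/-- Word of given length read in a two-sided sequence starting at position `k`. -/
def wordZ (x : ℤ → ℕ) (k : ℤ) (len : ℕ) : List ℕ := (List.range len).map fun i => x (k + i)

/-- The map `g : L^{α,β} → {0,1}`. -/
def gW (a b : ℕ → ℕ) (w : List ℕ) : ℕ :=
  if kk a w = 0 ∧ 0 < kk b w ∧ b (kk b w) ≤ 1 then 0 else 1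

/-- `w^♯`: the word `w` placed at positions `k,…,k+|w|−1`, followed by `g(w)` at
position `k+|w|`, and `1` at all other positions. -/
def wSharp (a b : ℕ → ℕ) (k : ℤ) (w : List ℕ) : ℤ → ℕ :=
  fun j => if k ≤ j ∧ j < k + w.length then w.getD (j - k).toNat 1
           else if j = k + w.length then gW a b w else 1

/-- The finite approximation sets `E^n ⊆ Σ^{α,β}`. -/
def En (α β : ℝ) (b : ℕ → ℕ) (n : ℕ) : Set (ℤ → ℕ) :=
  {x | wordZ x (-(n : ℤ)) (2 * n + 1) ∈ Lang α β ∧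
       x ((n : ℤ) + 1) = gW (aSeq α β) b (wordZ x (-(n : ℤ)) (2 * n + 1)) ∧
       ∀ j : ℤ, j < -(n : ℤ) ∨ (n : ℤ) + 1 < j → x j = 1}

/-- `s(x_k^-) = ε` for the left-infinite word `x_{(-∞,k-1]}`: no nonempty suffix of it is a
prefix of `a` or of `b`. -/
def leftStar (a b : ℕ → ℕ) (x : ℤ → ℕ) (k : ℤ) : Prop :=
  (∀ K : ℕ, 1 ≤ K → ¬ ∀ i : ℕ, i < K → x (k - K + i) = a i) ∧
  (∀ K : ℕ, 1 ≤ K → ¬ ∀ i : ℕ, i < K → x (k - K + i) = b i)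

/-- `E^n_{[k,l]}(v)`. -/
def EnCyl (α β : ℝ) (b : ℕ → ℕ) (n : ℕ) (k l : ℤ) (v : List ℕ) : Set (ℤ → ℕ) :=
  {x ∈ En α β b n | wordZ x k (l - k + 1).toNat = v}

/-- `E^{*,n}_{[k,l]}(v)`. -/
def EnCylStar (α β : ℝ) (b : ℕ → ℕ) (n : ℕ) (k l : ℤ) (v : List ℕ) : Set (ℤ → ℕ) :=
  {x ∈ EnCyl α β b n k l v | leftStar (aSeq α β) b x k}

/-- The Birkhoff sum `∑_{j=−n}^{n} φ(σ^j x)`. -/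
def birkhoff (φ : (ℤ → ℕ) → ℝ) (n : ℕ) (x : ℤ → ℕ) : ℝ :=
  ∑ j ∈ Finset.Icc (-(n : ℤ)) (n : ℤ), φ (shiftI j x)

/-- `Ξ^n_{[k,l]}(v)`. -/
def Xi (α β : ℝ) (b : ℕ → ℕ) (φ : (ℤ → ℕ) → ℝ) (n : ℕ) (k l : ℤ) (v : List ℕ) : ℝ :=
  ∑' x : (EnCyl α β b n k l v), Real.exp (birkhoff φ n x.1)

/-- `Ξ^{*,n}_{[k,l]}(v)`. -/
def XiStar (α β : ℝ) (b : ℕ → ℕ) (φ : (ℤ → ℕ) → ℝ) (n : ℕ) (k l : ℤ) (v : List ℕ) : ℝ :=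
  ∑' x : (EnCylStar α β b n k l v), Real.exp (birkhoff φ n x.1)

/-- `δ_i(f)`, as an extended nonnegative real. -/
def oscE {A : Type*} (f : (ℤ → A) → ℝ) (i : ℤ) : ℝ≥0∞ :=
  ⨆ (x : ℤ → A) (y : ℤ → A) (_ : ∀ k : ℤ, k ≠ i → x k = y k), ENNReal.ofReal |f x - f y|

/-- `‖f‖_δ` for a function on the full shift. -/
def enormFull {A : Type*} (f : (ℤ → A) → ℝ) : ℝ≥0∞ := ∑' i : ℤ, oscE f i

/-- `‖f‖_δ` for a function on a subshift `X`: infimum over continuous extensions. -/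
def enormOn {A : Type*} [TopologicalSpace A] (X : Set (ℤ → A)) (f : (ℤ → A) → ℝ) : ℝ≥0∞ :=
  ⨅ (g : (ℤ → A) → ℝ) (_ : Continuous g) (_ : ∀ x ∈ X, g x = f x), enormFull g

/-- `f` has bounded total oscillations on `X` (i.e. `f ∈ B(X)`). -/
def BTO {A : Type*} [TopologicalSpace A] (X : Set (ℤ → A)) (f : (ℤ → A) → ℝ) : Prop :=
  ContinuousOn f X ∧ enormOn X f ≠ ⊤

/-- The real value of `‖f‖_δ`. -/
def dnorm {A : Type*} [TopologicalSpace A] (X : Set (ℤ → A)) (f : (ℤ → A) → ℝ) : ℝ :=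
  (enormOn X f).toReal

/-- The pressure `p(φ)`. -/
def pressure (α β : ℝ) (b : ℕ → ℕ) (φ : (ℤ → ℕ) → ℝ) : ℝ :=
  limUnder atTop fun n : ℕ =>
    Real.log (∑' x : (En α β b n), Real.exp (birkhoff φ n x.1)) / (2 * n + 1)

/-- `ν` is a tangent functional to the pressure at `φ` (an equilibrium measure for `φ`). -/
def IsTangent (α β : ℝ) (b : ℕ → ℕ) (φ : (ℤ → ℕ) → ℝ) (ν : Measure (ℤ → ℕ)) : Prop :=
  ∀ f : (ℤ → ℕ) → ℝ, ContinuousOn f (SigmaAB α β) →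
    pressure α β b φ + ∫ x, f x ∂ν ≤ pressure α β b (fun x => φ x + f x)

/-- The cylinder `[x_1 … x_m]` in `Σ^{α,β}`. -/
def cyl (α β : ℝ) (x : ℤ → ℕ) (m : ℕ) : Set (ℤ → ℕ) :=
  {y ∈ SigmaAB α β | ∀ i : ℕ, 1 ≤ i → i ≤ m → y (i : ℤ) = x (i : ℤ)}

/-- `ν` is a weak Gibbs measure for `ψ` on `Σ^{α,β}`. -/
def WeakGibbs (α β : ℝ) (ν : Measure (ℤ → ℕ)) (ψ : (ℤ → ℕ) → ℝ) : Prop :=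
  ∀ δ : ℝ, 0 < δ → ∃ N : ℕ, ∀ m : ℕ, N ≤ m → ∀ x ∈ SigmaAB α β,
    |Real.log (ν (cyl α β x m)).toReal / m -
      (∑ l ∈ Finset.Icc (1 : ℤ) (m : ℤ), ψ (shiftI l x)) / m| ≤ δ


/-- Concatenation `w·x` of a word and a one-sided sequence. -/
def wordApp (w : List ℕ) (x : ℕ → ℕ) : ℕ → ℕ :=
  fun n => if n < w.length then w.getD n 1 else x (n - w.length)

/-- `σ^k` on one-sided sequences. -/
def shiftN (k : ℕ) (s : ℕ → ℕ) : ℕ → ℕ := fun n => s (k + n)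

end AB

/-!
Write `w = i(y)_0 … i(y)_{n-1}` with `y ∈ [0,1)` and `s(w) = b_0 … b_{l-1}`. The word `ŵ` agrees
with `w` except that one letter is lowered (and, in the second case, the next one is raised to
`λ - 1`). Lowering the digit of `y` at position `j` gives a target point below `T^j y`; going back
through the inverse branches of `T`, it is `T^j x` for some `x` whose first `j` digits are those of
`y`, so `ŵ` is a prefix of `i(x)`. The only obstruction, a word ending in `0 1 … 1`, whose cylinder
`T^j` maps only down to `α`, is ruled out by the placement of the modified letters in front of the
longest suffix of `b_0 … b_{l-2}` in `P^a`. Finally `ŵ` has no suffix in `P^b`, as it would make an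
expansion lexicographically larger than `b`, and none in `P^a`, as `ŵ` has a letter `≥ 2`
followed only by nonzero letters.
-/

namespace AB

open Set Function

section Dynamics

variable {α β : ℝ}

lemma T_mem_Ico (x : ℝ) : T α β x ∈ Ico 0 1 :=
  ⟨Int.fract_nonneg _, Int.fract_lt_one _⟩

lemma iterate_T_mem_Ico {x : ℝ} (hx : x ∈ Ico 0 1) : ∀ n, (T α β)^[n] x ∈ Ico 0 1
  | 0 => hx
  | n + 1 => by rw [iterate_succ_apply']; exact T_mem_Ico _

lemma digit_add_T {x : ℝ} (h : 0 ≤ β * x + α) :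
    (digit α β x : ℝ) + T α β x = β * x + α := by
  have hd : ((digit α β x : ℤ) : ℝ) = ⌊β * x + α⌋ := by
    rw [digit, Int.toNat_of_nonneg (Int.floor_nonneg.2 h)]
  push_cast at hd
  rw [hd, T]
  ring

lemma digit_eq_of_le_of_lt {x : ℝ} {d : ℕ} (h₁ : (d : ℝ) ≤ β * x + α)
    (h₂ : β * x + α < d + 1) : digit α β x = d := by
  rw [digit, Int.floor_eq_iff.2 ⟨by exact_mod_cast h₁, by exact_mod_cast h₂⟩, Int.toNat_natCast]

lemma digit_mono (hβ : 0 ≤ β) : Monotone (digit α β) := fun _ _ hxy =>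
  Int.toNat_le_toNat (Int.floor_mono (by gcongr))

lemma iSeq_zero (x : ℝ) : iSeq α β x 0 = digit α β x := rfl

lemma iSeq_succ (x : ℝ) (n : ℕ) : iSeq α β x (n + 1) = iSeq α β (T α β x) n := by
  simp only [iSeq, iterate_succ_apply]

lemma iSeq_iterate (x : ℝ) (k n : ℕ) : iSeq α β ((T α β)^[k] x) n = iSeq α β x (k + n) := by
  simp only [iSeq, ← iterate_add_apply, add_comm]

lemma iterate_T_succ (hα : 0 ≤ α) (hβ : 0 ≤ β) {x : ℝ} (hx : x ∈ Ico 0 1) (j : ℕ) :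
    (T α β)^[j + 1] x = β * (T α β)^[j] x + α - iSeq α β x j := by
  have h := digit_add_T (α := α) (β := β) (x := (T α β)^[j] x)
    (by have := (iterate_T_mem_Ico (α := α) (β := β) hx j).1; positivity)
  rw [iterate_succ_apply', iSeq]
  linarith

lemma iSeq_le_of_le (hα : 0 ≤ α) (hβ : 0 ≤ β) {x y : ℝ} (hx : x ∈ Ico 0 1) (hy : y ∈ Ico 0 1)
    (hxy : x ≤ y) {j : ℕ} (h : ∀ i < j, iSeq α β x i = iSeq α β y i) :
    iSeq α β x j ≤ iSeq α β y j := by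
  suffices (T α β)^[j] x ≤ (T α β)^[j] y from digit_mono hβ this
  induction j with
  | zero => exact hxy
  | succ j ih =>
    rw [iterate_T_succ hα hβ hx, iterate_T_succ hα hβ hy, h j j.lt_succ_self]
    gcongr
    exact ih fun i hi => h i (hi.trans j.lt_succ_self)

end Dynamics

/-- The point of `J_d` that `T` maps to `v`. -/
def invBranch (α β : ℝ) (d : ℕ) (v : ℝ) : ℝ := ((d : ℝ) - α + v) / β

section InvBranch

variable {α β : ℝ} {d : ℕ} {v : ℝ}

lemma mul_invBranch_add (hβ : β ≠ 0) : β * invBranch α β d v + α = d + v := by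
  rw [invBranch]; field_simp; ring

lemma invBranch_lt_iff (hβ : 0 < β) {x : ℝ} :
    invBranch α β d v < x ↔ (d : ℝ) + v < β * x + α := by
  rw [← mul_invBranch_add hβ.ne', add_lt_add_iff_right, mul_lt_mul_iff_right₀ hβ]

lemma le_invBranch_iff (hβ : 0 < β) {x : ℝ} :
    x ≤ invBranch α β d v ↔ β * x + α ≤ d + v := by
  rw [← not_lt, invBranch_lt_iff hβ, not_lt]

lemma digit_invBranch (hβ : β ≠ 0) (hv : v ∈ Ico 0 1) : digit α β (invBranch α β d v) = d :=
  digit_eq_of_le_of_lt (by rw [mul_invBranch_add hβ]; linarith [hv.1])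
    (by rw [mul_invBranch_add hβ]; linarith [hv.2])

lemma T_invBranch (hβ : β ≠ 0) (hv : v ∈ Ico 0 1) : T α β (invBranch α β d v) = v := by
  have h := digit_add_T (α := α) (β := β) (x := invBranch α β d v)
    (by rw [mul_invBranch_add hβ]; have := hv.1; positivity)
  rw [digit_invBranch hβ hv, mul_invBranch_add hβ] at h
  linarith

lemma iSeq_invBranch_zero (hβ : β ≠ 0) (hv : v ∈ Ico 0 1) :
    iSeq α β (invBranch α β d v) 0 = d :=
  digit_invBranch hβ hv

lemma iSeq_invBranch_succ (hβ : β ≠ 0) (hv : v ∈ Ico 0 1) (n : ℕ) :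
    iSeq α β (invBranch α β d v) (n + 1) = iSeq α β v n := by
  rw [iSeq_succ, T_invBranch hβ hv]

end InvBranch


lemma cylinder_mem_nhds (s : ℕ → ℕ) (N : ℕ) : {t : ℕ → ℕ | ∀ i < N, t i = s i} ∈ 𝓝 s :=
  set_pi_mem_nhds (finite_Iio N) fun i _ => (isOpen_discrete {s i}).mem_nhds rfl

section Limit

variable {α β : ℝ} {b : ℕ → ℕ}

lemma eventually_iSeq_eq (hb : Tendsto (iSeq α β) (𝓝[<] (1 : ℝ)) (𝓝 b)) (N : ℕ) :
    ∀ᶠ x in 𝓝[<] (1 : ℝ), ∀ i < N, iSeq α β x i = b i :=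
  hb (cylinder_mem_nhds b N)

lemma exists_mem_Ioo_iSeq_eq (hb : Tendsto (iSeq α β) (𝓝[<] (1 : ℝ)) (𝓝 b)) {z : ℝ}
    (hz : z < 1) (N : ℕ) : ∃ x ∈ Ioo z 1, ∀ i < N, iSeq α β x i = b i :=
  ((eventually_mem_set.2 (Ioo_mem_nhdsLT hz)).and (eventually_iSeq_eq hb N)).exists

lemma b_zero (hβ : 0 < β) (hb : Tendsto (iSeq α β) (𝓝[<] (1 : ℝ)) (𝓝 b)) :
    b 0 = lamNat α β := by
  have hceil := Int.ceil_lt_add_one (α + β)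
  obtain ⟨x, hx, hxb⟩ := exists_mem_Ioo_iSeq_eq hb
    (z := ((⌈α + β⌉ - 1 : ℤ) - α) / β) (by rw [div_lt_one hβ]; push_cast; linarith) 1
  have h₁ : ((⌈α + β⌉ - 1 : ℤ) : ℝ) ≤ β * x + α := by
    have := (div_lt_iff₀' hβ).1 hx.1; linarith
  have h₂ : β * x + α < ((⌈α + β⌉ - 1 : ℤ) : ℝ) + 1 := by
    have := mul_lt_mul_of_pos_left hx.2 hβ
    push_cast; linarith [Int.le_ceil (α + β)]
  rw [← hxb 0 one_pos, iSeq_zero, digit, lamNat, Int.floor_eq_iff.2 ⟨h₁, h₂⟩]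

lemma iSeq_le_b (hα : 0 ≤ α) (hβ : 0 < β) (hb : Tendsto (iSeq α β) (𝓝[<] (1 : ℝ)) (𝓝 b))
    {x : ℝ} (hx : x ∈ Ico 0 1) {j : ℕ} (h : ∀ i < j, iSeq α β x i = b i) :
    iSeq α β x j ≤ b j := by
  obtain ⟨x', hx', hx'b⟩ := exists_mem_Ioo_iSeq_eq hb hx.2 (j + 1)
  have hle := iSeq_le_of_le hα hβ.le hx ⟨hx.1.trans hx'.1.le, hx'.2⟩ hx'.1.le
    (j := j) fun i hi => (h i hi).trans (hx'b i (by omega)).symm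
  rwa [hx'b j j.lt_succ_self] at hle

end Limit

section Lambda

variable {α β : ℝ}

lemma lamNat_lt (hαβ : 0 < α + β) : (lamNat α β : ℝ) < α + β := by
  have h1 : (1 : ℤ) ≤ ⌈α + β⌉ := Int.one_le_ceil_iff.2 hαβ
  have h : ((lamNat α β : ℤ) : ℝ) = ⌈α + β⌉ - 1 := by
    rw [lamNat, Int.toNat_of_nonneg (by omega)]; push_cast; ring
  push_cast at h
  linarith [Int.ceil_lt_add_one (α + β)]

lemma three_le_lamNat (h : 3 < α + β) : 3 ≤ lamNat α β := by
  have : (3 : ℤ) < ⌈α + β⌉ := Int.lt_ceil.2 (by exact_mod_cast h)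
  rw [lamNat]; omega

lemma digit_le_lamNat (hβ : 0 < β) {x : ℝ} (hx : x < 1) : digit α β x ≤ lamNat α β := by
  refine Int.toNat_le_toNat (Int.le_sub_one_iff.2 (Int.floor_lt.2 ?_))
  nlinarith [Int.le_ceil (α + β)]

lemma iSeq_le_lamNat (hβ : 0 < β) {y : ℝ} (hy : y ∈ Ico 0 1) (i : ℕ) :
    iSeq α β y i ≤ lamNat α β :=
  digit_le_lamNat hβ (iterate_T_mem_Ico hy i).2

end Lambda

/-- `W_0 … W_{j-1}` has a nonempty suffix in `P^a`, for `α = 1/β` where `a = 0 1 1 1 …`. -/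
def EndsInZeroOnes (W : ℕ → ℕ) (j : ℕ) : Prop :=
  ∃ m < j, W m = 0 ∧ ∀ i, m < i → i < j → W i = 1

lemma endsInZeroOnes_succ_iff {W : ℕ → ℕ} {j : ℕ} :
    EndsInZeroOnes W (j + 1) ↔ W j = 0 ∨ (W j = 1 ∧ EndsInZeroOnes W j) := by
  constructor
  · rintro ⟨m, hm, hm0, hrun⟩
    rcases (Nat.lt_succ_iff_lt_or_eq.1 hm) with hmj | rfl
    · exact Or.inr ⟨hrun j hmj j.lt_succ_self, m, hmj, hm0,
        fun i hmi hij => hrun i hmi (hij.trans j.lt_succ_self)⟩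
    · exact Or.inl hm0
  · rintro (h0 | ⟨h1, m, hm, hm0, hrun⟩)
    · exact ⟨j, j.lt_succ_self, h0, fun i hji hij => absurd hij (by omega)⟩
    · refine ⟨m, hm.trans j.lt_succ_self, hm0, fun i hmi hij => ?_⟩
      rcases Nat.lt_succ_iff_lt_or_eq.1 hij with hij | rfl
      exacts [hrun i hmi hij, h1]

lemma endsInZeroOnes_shift {W : ℕ → ℕ} {q p : ℕ} (hq : 2 ≤ W q) (hp : 0 < p)
    (h : EndsInZeroOnes W (q + p)) : EndsInZeroOnes (fun i => W (q + i)) p := by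
  obtain ⟨m, hm, hm0, hrun⟩ := h
  rcases lt_trichotomy m q with hmq | rfl | hmq
  · have := hrun q hmq (by omega); omega
  · omega
  · refine ⟨m - q, by omega, by simpa [Nat.add_sub_cancel' hmq.le] using hm0, fun i h1 h2 => ?_⟩
    exact hrun (q + i) (by omega) (by omega)

section InverseAlpha

variable {α β : ℝ}

lemma invBranch_one_self (hα : α = 1 / β) : invBranch α β 1 α = α := by
  rw [invBranch, hα]; simp

lemma invBranch_zero_self : invBranch α β 0 α = 0 := by
  simp [invBranch]

lemma alpha_mem_Ico (hβ : 1 < β) (hα : α = 1 / β) : α ∈ Ico 0 1 := by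
  rw [hα]; exact ⟨by positivity, (div_lt_one (by linarith)).2 hβ⟩

lemma aSeq_zero (hβ : 1 < β) (hα : α = 1 / β) : aSeq α β 0 = 0 := by
  rw [aSeq, ← invBranch_zero_self, iSeq_invBranch_zero (by positivity)
    (alpha_mem_Ico hβ hα)]

lemma aSeq_succ (hβ : 1 < β) (hα : α = 1 / β) (n : ℕ) : aSeq α β (n + 1) = 1 := by
  have hβ0 : β ≠ 0 := by positivity
  have hself : ∀ n, iSeq α β α n = 1 := by
    intro n
    induction n with
    | zero =>
      have h := iSeq_invBranch_zero (α := α) (d := 1) hβ0 (alpha_mem_Ico hβ hα)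
      rwa [invBranch_one_self hα] at h
    | succ n ih =>
      have h := iSeq_invBranch_succ (α := α) (d := 1) hβ0 (alpha_mem_Ico hβ hα) n
      rwa [invBranch_one_self hα, ih] at h
  rw [aSeq, ← invBranch_zero_self, iSeq_invBranch_succ hβ0 (alpha_mem_Ico hβ hα), hself]

lemma alpha_le_iterate_of_endsInZeroOnes (hβ : 1 < β) (hα : α = 1 / β) {x : ℝ}
    (hx : x ∈ Ico 0 1) {j : ℕ} (h : EndsInZeroOnes (iSeq α β x) j) : α ≤ (T α β)^[j] x := by
  have hαβ : β * α = 1 := by rw [hα]; field_simp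
  have hα0 := (alpha_mem_Ico hβ hα).1
  induction j with
  | zero => obtain ⟨m, hm, -⟩ := h; omega
  | succ j ih =>
    have hT0 := (iterate_T_mem_Ico (α := α) (β := β) hx j).1
    rw [iterate_T_succ hα0 (by linarith) hx]
    rcases endsInZeroOnes_succ_iff.1 h with h0 | ⟨h1, hj⟩
    · rw [h0]; push_cast; nlinarith
    · rw [h1]; push_cast; nlinarith [ih hj]

lemma iSeq_ne_zero_of_endsInZeroOnes (hβ : 1 < β) (hα : α = 1 / β) {x : ℝ}
    (hx : x ∈ Ico 0 1) {j : ℕ} (h : EndsInZeroOnes (iSeq α β x) j) : iSeq α β x j ≠ 0 := by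
  have hαβ : β * α = 1 := by rw [hα]; field_simp
  have hα0 := (alpha_mem_Ico hβ hα).1
  have hle := alpha_le_iterate_of_endsInZeroOnes hβ hα hx h
  have hT := (T_mem_Ico (α := α) (β := β) ((T α β)^[j] x)).2
  have hsum := digit_add_T (α := α) (β := β) (x := (T α β)^[j] x) (by nlinarith)
  intro h0
  rw [show digit α β ((T α β)^[j] x) = 0 from h0] at hsum
  push_cast at hsum
  nlinarith

end InverseAlpha

section Realization

variable {α β : ℝ}

/-- The interval `[0, T^j y)`, or `[α, T^j y)` when `i(y)_0 … i(y)_{j-1}` ends in `0 1 … 1`;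
`T^j` maps the cylinder of that word onto a set containing it. -/
def IsBelowIterate (α β y : ℝ) (j : ℕ) (ζ : ℝ) : Prop :=
  0 ≤ ζ ∧ ζ < (T α β)^[j] y ∧ (ζ < α → ¬ EndsInZeroOnes (iSeq α β y) j)

lemma IsBelowIterate.invBranch (hβ : 1 < β) (hα : α = 1 / β) {y : ℝ} (hy : y ∈ Ico 0 1)
    {j : ℕ} {ζ : ℝ} (h : IsBelowIterate α β y (j + 1) ζ) :
    IsBelowIterate α β y j (invBranch α β (iSeq α β y j) ζ) := by
  obtain ⟨hζ0, hζ, hside⟩ := h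
  have hβ0 : 0 < β := by linarith
  have hα1 := alpha_mem_Ico hβ hα
  have hαβ : β * α = 1 := by rw [hα]; field_simp
  have hstep : β * (T α β)^[j] y + α = iSeq α β y j + (T α β)^[j + 1] y := by
    rw [iterate_T_succ hα1.1 hβ0.le hy]; ring
  have hζα : iSeq α β y j = 0 → α ≤ ζ := fun h0 =>
    not_lt.1 fun hζα => hside hζα (endsInZeroOnes_succ_iff.2 (Or.inl h0))
  refine ⟨(le_invBranch_iff hβ0).2 ?_, (invBranch_lt_iff hβ0).2 (by rw [hstep]; linarith),
    fun hlt hends => ?_⟩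
  · rcases Nat.eq_zero_or_pos (iSeq α β y j) with h0 | hpos
    · rw [h0]; push_cast; linarith [hζα h0]
    · have : (1 : ℝ) ≤ iSeq α β y j := by exact_mod_cast hpos
      linarith [hα1.2]
  · have hsum := (invBranch_lt_iff hβ0).1 hlt
    have h1 : iSeq α β y j = 1 := by
      have hne := iSeq_ne_zero_of_endsInZeroOnes hβ hα hy hends
      have : (iSeq α β y j : ℝ) < 2 := by linarith [hα1.2]
      have : iSeq α β y j < 2 := by exact_mod_cast this
      omega
    rw [h1] at hsum
    push_cast at hsum
    exact hside (by linarith) (endsInZeroOnes_succ_iff.2 (Or.inr ⟨h1, hends⟩))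

lemma exists_iSeq_eq_of_isBelowIterate (hβ : 1 < β) (hα : α = 1 / β) {y : ℝ}
    (hy : y ∈ Ico 0 1) : ∀ {j : ℕ} {ζ : ℝ}, IsBelowIterate α β y j ζ →
      ∃ x ∈ Ico 0 1, (∀ i < j, iSeq α β x i = iSeq α β y i) ∧ (T α β)^[j] x = ζ
  | 0, ζ, ⟨hζ0, hζ, _⟩ => ⟨ζ, ⟨hζ0, hζ.trans hy.2⟩, fun i hi => absurd hi i.not_lt_zero, rfl⟩
  | j + 1, ζ, h => by
    have hβ0 : β ≠ 0 := by positivity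
    have hζ : ζ ∈ Ico 0 1 := ⟨h.1, h.2.1.trans (iterate_T_mem_Ico hy (j + 1)).2⟩
    obtain ⟨x, hx, hagree, hxj⟩ := exists_iSeq_eq_of_isBelowIterate hβ hα hy (h.invBranch hβ hα hy)
    refine ⟨x, hx, fun i hi => ?_, ?_⟩
    · rcases Nat.lt_succ_iff_lt_or_eq.1 hi with hi | rfl
      · exact hagree i hi
      · rw [← add_zero i, ← iSeq_iterate, hxj, iSeq_invBranch_zero hβ0 hζ, add_zero]
    · rw [iterate_succ_apply', hxj, T_invBranch hβ0 hζ]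

end Realization

section Words

variable {X s : ℕ → ℕ} {n k : ℕ}

lemma take_append_set_drop {γ : Type*} (w : List γ) (q i : ℕ) (x : γ) :
    w.take q ++ (w.drop q).set i x = w.set (q + i) x := by
  rw [List.set_drop, ← List.take_set_of_le (Nat.le_add_right q i), List.take_append_drop]

lemma take_append_set_set_drop {γ : Type*} (w : List γ) (q p : ℕ) (x x' : γ) :
    w.take q ++ ((w.drop q).set p x).set (p + 1) x' = (w.set (q + p) x).set (q + p + 1) x' := by
  rw [List.set_drop, ← List.take_set_of_le (Nat.le_add_right q p), take_append_set_drop,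
    add_assoc]

@[simp] lemma length_pre : (pre X n).length = n := by simp [pre]

lemma getElem?_pre (i : ℕ) : (pre X n)[i]? = if i < n then some (X i) else none := by
  by_cases h : i < n <;> simp [pre, h]

lemma pre_eq_pre_iff : pre X n = pre s n ↔ ∀ i < n, X i = s i := by
  simp [pre]

lemma drop_pre (m : ℕ) : (pre X n).drop m = pre (fun i => X (m + i)) (n - m) := by
  apply List.ext_getElem?
  intro i
  rw [List.getElem?_drop, getElem?_pre, getElem?_pre]
  by_cases h : i < n - m
  · rw [if_pos (by omega), if_pos h]
  · rw [if_neg (by omega), if_neg h]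

lemma pre_update (j c : ℕ) : pre (update X j c) n = (pre X n).set j c := by
  apply List.ext_getElem?
  intro i
  rw [List.getElem?_set, getElem?_pre, getElem?_pre, length_pre, update_apply]
  by_cases hij : i = j
  · subst hij; simp
  · simp [hij, Ne.symm hij]

lemma drop_kk (s : ℕ → ℕ) (w : List ℕ) : w.drop (w.length - kk s w) = pre s (kk s w) :=
  Nat.findGreatest_spec (P := fun k => w.drop (w.length - k) = pre s k) (Nat.zero_le _)
    (by simp [pre])

lemma kk_le (s : ℕ → ℕ) (w : List ℕ) : kk s w ≤ w.length := Nat.findGreatest_le _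

lemma kk_pre_spec {i : ℕ} (hi : i < kk s (pre X n)) :
    X (n - kk s (pre X n) + i) = s i := by
  have hle : kk s (pre X n) ≤ n := by simpa using kk_le s (pre X n)
  have h := drop_kk s (pre X n)
  rw [length_pre, drop_pre, Nat.sub_sub_self hle, pre_eq_pre_iff] at h
  exact h i hi

lemma le_kk_pre (hk : k ≤ n) (h : ∀ i < k, X (n - k + i) = s i) : k ≤ kk s (pre X n) :=
  Nat.le_findGreatest (by simpa using hk)
    (by rw [length_pre, drop_pre, Nat.sub_sub_self hk, pre_eq_pre_iff]; exact h)

lemma kk_pre_eq_zero (h : ∀ k, 0 < k → k ≤ n → ¬ ∀ i < k, X (n - k + i) = s i) :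
    kk s (pre X n) = 0 := by
  by_contra hne
  exact h _ (Nat.pos_of_ne_zero hne) (by simpa using kk_le s (pre X n))
    fun i hi => kk_pre_spec hi

end Words

section Language

variable {α β : ℝ}

lemma pre_iSeq_mem_Lang {x : ℝ} (hx : x ∈ Ico 0 1) (n : ℕ) : pre (iSeq α β x) n ∈ Lang α β :=
  ⟨iSeq α β x, subset_closure ⟨x, hx, rfl⟩, 0, by simp [pre, wordN]⟩

lemma exists_eq_pre_of_mem_Lang {w : List ℕ} (hw : w ∈ Lang α β) :
    ∃ y ∈ Ico 0 1, w = pre (iSeq α β y) w.length := by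
  obtain ⟨s, hs, k, hwk⟩ := hw
  obtain ⟨_, ht, x, hx, rfl⟩ := mem_closure_iff_nhds.1 hs _ (cylinder_mem_nhds s (k + w.length))
  refine ⟨(T α β)^[k] x, iterate_T_mem_Ico hx k, ?_⟩
  conv_lhs => rw [hwk]
  rw [wordN, pre, List.map_inj_left]
  intro i hi
  rw [iSeq_iterate, ht (k + i) (by simp at hi; omega)]

end Language

section Hat

variable {a b : ℕ → ℕ} {lam : ℕ} {w : List ℕ}

lemma kk_lt_kk_of_sWord_mem_Pset (hab : a 0 ≠ b 0) (hs : sWord a b w ∈ Pset b)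
    (hne : sWord a b w ≠ []) : kk a w < kk b w := by
  unfold sWord at hs hne
  split_ifs at hs hne with hba hab'
  · obtain ⟨l, hl⟩ := hs
    rw [drop_kk] at hl
    have h0 := congrArg (·[0]?) hl
    simp only [getElem?_pre, if_pos (pos_of_gt hba)] at h0
    split_ifs at h0
    exact absurd (Option.some.inj h0) hab
  · exact hab'
  · exact absurd rfl hne

lemma hatW_of_kk_lt (h : kk a w < kk b w) :
    hatW a b lam w = w.take (w.length - kk b w) ++ hatP a b lam (pre b (kk b w)) := by
  have hs : sWord a b w = pre b (kk b w) := by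
    rw [sWord, if_neg (by omega), if_pos h, drop_kk]
  rw [hatW, hs, length_pre]

lemma sWord_eq_nil (ha : kk a w = 0) (hb : kk b w = 0) : sWord a b w = [] := by
  simp [sWord, ha, hb]

variable {l : ℕ}

lemma pre_notMem_Pset (hab : a 0 ≠ b 0) (hl : 0 < l) : pre b l ∉ Pset a := by
  rintro ⟨l', hl'⟩
  have h0 := congrArg (·[0]?) hl'
  simp only [getElem?_pre, if_pos hl] at h0
  split_ifs at h0
  exact hab (Option.some.inj h0).symm

lemma getLast?_getD_pre (hl : 0 < l) : (pre b l).getLast?.getD 0 = b (l - 1) := by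
  rw [List.getLast?_eq_getElem?, length_pre, getElem?_pre, if_pos (by omega)]
  rfl

lemma dropLast_pre : (pre b l).dropLast = pre b (l - 1) := by
  rw [List.dropLast_eq_take, length_pre, pre, pre, ← List.map_take, List.take_range,
    min_eq_left (Nat.sub_le l 1)]

lemma hatP_pre_of_three_le (hab : a 0 ≠ b 0) (hl : 0 < l) (h3 : 3 ≤ b (l - 1)) :
    hatP a b lam (pre b l) = (pre b l).set (l - 1) (b (l - 1) - 1) := by
  have hne : pre b l ≠ [] := List.ne_nil_of_length_pos (by simpa using hl)
  rw [hatP, if_neg hne, if_neg (pre_notMem_Pset hab hl), getLast?_getD_pre hl, if_pos h3,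
    dropLast_pre]
  apply List.ext_getElem?
  intro i
  rw [List.getElem?_set, List.getElem?_append, length_pre, getElem?_pre, getElem?_pre, length_pre]
  split_ifs <;> simp_all <;> omega

lemma hatP_pre_of_lt_three (hab : a 0 ≠ b 0) (h3 : b (l - 1) < 3) {p : ℕ}
    (hp : kk a (pre b (l - 1)) + p + 2 = l) :
    hatP a b lam (pre b l) = ((pre b l).set p (b p - 1)).set (p + 1) (lam - 1) := by
  have hl : 0 < l := by omega
  have hne : pre b l ≠ [] := List.ne_nil_of_length_pos (by simpa using hl)
  rw [hatP, if_neg hne, if_neg (pre_notMem_Pset hab hl), getLast?_getD_pre hl,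
    if_neg (by omega), dropLast_pre, length_pre, show l - kk a (pre b (l - 1)) - 2 = p by omega,
    show l - kk a (pre b (l - 1)) - 1 = p + 1 by omega, List.getD_eq_getElem?_getD,
    getElem?_pre, if_pos (by omega), Option.getD_some]

end Hat

section Splice

variable {α β : ℝ} {b : ℕ → ℕ}

lemma iSeq_eq_update_of_iterate_eq (hβ : β ≠ 0) {x y : ℝ} (hy : y ∈ Ico 0 1) {j d : ℕ}
    (hagree : ∀ i < j, iSeq α β x i = iSeq α β y i)
    (hx : (T α β)^[j] x = invBranch α β d ((T α β)^[j + 1] y)) :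
    iSeq α β x = update (iSeq α β y) j d := by
  have hv := iterate_T_mem_Ico (α := α) (β := β) hy (j + 1)
  funext i
  rcases lt_trichotomy i j with hi | rfl | hi
  · rw [update_of_ne hi.ne, hagree i hi]
  · rw [update_self, ← add_zero i, ← iSeq_iterate, hx, iSeq_invBranch_zero hβ hv]
  · obtain ⟨k, rfl⟩ := Nat.exists_eq_add_of_lt hi
    rw [update_of_ne (by omega), add_assoc, ← iSeq_iterate, hx, iSeq_invBranch_succ hβ hv,
      iSeq_iterate, add_right_comm]
    rfl

lemma iSeq_eq_update_update_of_iterate_eq (hβ : β ≠ 0) {x y : ℝ} (hy : y ∈ Ico 0 1)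
    {j c e : ℕ} (hagree : ∀ i < j, iSeq α β x i = iSeq α β y i)
    (hz : invBranch α β e ((T α β)^[j + 2] y) ∈ Ico 0 1)
    (hx : (T α β)^[j] x = invBranch α β c (invBranch α β e ((T α β)^[j + 2] y))) :
    iSeq α β x = update (update (iSeq α β y) j c) (j + 1) e := by
  have hv := iterate_T_mem_Ico (α := α) (β := β) hy (j + 2)
  funext i
  rcases lt_trichotomy i j with hi | rfl | hi
  · rw [update_of_ne (by omega), update_of_ne hi.ne, hagree i hi]
  · rw [update_of_ne (by omega), update_self, ← add_zero i, ← iSeq_iterate, hx,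
      iSeq_invBranch_zero hβ hz]
  · obtain ⟨k, rfl⟩ := Nat.exists_eq_add_of_lt hi
    rcases k with _ | k
    · rw [update_self, add_assoc, ← iSeq_iterate, hx, iSeq_invBranch_succ hβ hz,
        iSeq_invBranch_zero hβ hv]
    · rw [update_of_ne (by omega), update_of_ne (by omega), show j + (k + 1) + 1 = j + (k + 2) by
        ring, ← iSeq_iterate, hx, iSeq_invBranch_succ hβ hz, iSeq_invBranch_succ hβ hv,
        iSeq_iterate]
      ring_nf

lemma exists_iSeq_eq_update (hβ : 1 < β) (hα : α = 1 / β) {y : ℝ} (hy : y ∈ Ico 0 1)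
    {j c : ℕ} (hc2 : 2 ≤ c) (hc : c < iSeq α β y j) :
    ∃ x ∈ Ico 0 1, iSeq α β x = update (iSeq α β y) j c := by
  have hβ0 : 0 < β := by linarith
  have hα1 := alpha_mem_Ico hβ hα
  have hαβ : β * α = 1 := by rw [hα]; field_simp
  have hv := iterate_T_mem_Ico (α := α) (β := β) hy (j + 1)
  have hstep : β * (T α β)^[j] y + α = iSeq α β y j + (T α β)^[j + 1] y := by
    rw [iterate_T_succ hα1.1 hβ0.le hy]; ring
  have hcR : (c : ℝ) + 1 ≤ iSeq α β y j := by exact_mod_cast hc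
  have h2R : (2 : ℝ) ≤ c := by exact_mod_cast hc2
  have hαζ : α ≤ invBranch α β c ((T α β)^[j + 1] y) :=
    (le_invBranch_iff hβ0).2 (by linarith [hv.1, hα1.2])
  obtain ⟨x, hx, hagree, hxj⟩ := exists_iSeq_eq_of_isBelowIterate hβ hα hy (j := j)
    ⟨hα1.1.trans hαζ, (invBranch_lt_iff hβ0).2 (by linarith [hv.2]),
      fun h => absurd h (not_lt.2 hαζ)⟩
  exact ⟨x, hx, iSeq_eq_update_of_iterate_eq hβ0.ne' hy hagree hxj⟩

lemma exists_iSeq_eq_update_update (hβ : 1 < β) (hα : α = 1 / β) {y : ℝ} (hy : y ∈ Ico 0 1)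
    {j c e : ℕ} (he2 : 2 ≤ e) (he : e < lamNat α β) (hc : c < iSeq α β y j)
    (hside : c = 0 → ¬ EndsInZeroOnes (iSeq α β y) j) :
    ∃ x ∈ Ico 0 1, iSeq α β x = update (update (iSeq α β y) j c) (j + 1) e := by
  have hβ0 : 0 < β := by linarith
  have hα1 := alpha_mem_Ico hβ hα
  have hαβ : β * α = 1 := by rw [hα]; field_simp
  have hv := iterate_T_mem_Ico (α := α) (β := β) hy (j + 2)
  have hv' := iterate_T_mem_Ico (α := α) (β := β) hy (j + 1)
  have hstep : β * (T α β)^[j] y + α = iSeq α β y j + (T α β)^[j + 1] y := by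
    rw [iterate_T_succ hα1.1 hβ0.le hy]; ring
  have hcR : (c : ℝ) + 1 ≤ iSeq α β y j := by exact_mod_cast hc
  have h2R : (2 : ℝ) ≤ e := by exact_mod_cast he2
  have heR : (e : ℝ) + 1 ≤ lamNat α β := by exact_mod_cast he
  have hlam := lamNat_lt (α := α) (β := β) (by linarith [hα1.1])
  set z := invBranch α β e ((T α β)^[j + 2] y)
  have hαz : α ≤ z := (le_invBranch_iff hβ0).2 (by linarith [hv.1, hα1.2])
  have hz1 : z < 1 := (invBranch_lt_iff hβ0).2 (by linarith [hv.2])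
  have hside' : invBranch α β c z < α → ¬ EndsInZeroOnes (iSeq α β y) j := by
    intro hlt
    refine hside (Nat.eq_zero_of_not_pos fun hpos => ?_)
    have : (1 : ℝ) ≤ c := by exact_mod_cast hpos
    have := (invBranch_lt_iff hβ0).1 hlt
    linarith
  obtain ⟨x, hx, hagree, hxj⟩ := exists_iSeq_eq_of_isBelowIterate hβ hα hy (j := j)
    ⟨(le_invBranch_iff hβ0).2 (by linarith [Nat.cast_nonneg (α := ℝ) c]),
      (invBranch_lt_iff hβ0).2 (by linarith [hv'.1]), hside'⟩
  exact ⟨x, hx, iSeq_eq_update_update_of_iterate_eq hβ0.ne' hy hagree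
    ⟨hα1.1.trans hαz, hz1⟩ hxj⟩

end Splice

section NoSuffix

variable {α β : ℝ} {b : ℕ → ℕ}

lemma aSeq_le_one (hβ : 1 < β) (hα : α = 1 / β) : ∀ i, aSeq α β i ≤ 1
  | 0 => by rw [aSeq_zero hβ hα]; omega
  | i + 1 => (aSeq_succ hβ hα i).le

lemma kk_aSeq_pre_eq_zero (hβ : 1 < β) (hα : α = 1 / β) {X : ℕ → ℕ} {n j : ℕ} (hj : j < n)
    (h2 : 2 ≤ X j) (hpos : ∀ i, j < i → i < n → X i ≠ 0) : kk (aSeq α β) (pre X n) = 0 := by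
  refine kk_pre_eq_zero fun k hk hkn hmatch => ?_
  by_cases hq : n - k ≤ j
  · have h := hmatch (j - (n - k)) (by omega)
    rw [Nat.add_sub_cancel' hq] at h
    have := aSeq_le_one hβ hα (j - (n - k))
    omega
  · exact hpos (n - k) (by omega) (by omega) ((hmatch 0 hk).trans (aSeq_zero hβ hα))

/-- A suffix in `P^b` starting at some `q ≤ j` would make the expansion of `T^q y` exceed `b` at
`j - q`; one starting after `j` fails at its first letter. -/
lemma kk_b_pre_eq_zero (hα : 0 ≤ α) (hβ : 0 < β)
    (hb : Tendsto (iSeq α β) (𝓝[<] (1 : ℝ)) (𝓝 b)) {y : ℝ} (hy : y ∈ Ico 0 1) {X : ℕ → ℕ}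
    {n j : ℕ} (hj : j < n) (hagree : ∀ i < j, X i = iSeq α β y i) (hlt : X j < iSeq α β y j)
    (hsmall : ∀ i, j ≤ i → i < n → X i < b 0) : kk b (pre X n) = 0 := by
  refine kk_pre_eq_zero fun k hk hkn hmatch => ?_
  by_cases hq : n - k ≤ j
  · have hle := iSeq_le_b hα hβ hb (iterate_T_mem_Ico hy (n - k)) (j := j - (n - k))
      fun i hi => by rw [iSeq_iterate, ← hagree _ (by omega), hmatch i (by omega)]
    have h := hmatch (j - (n - k)) (by omega)
    rw [iSeq_iterate, Nat.add_sub_cancel' hq] at hle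
    rw [Nat.add_sub_cancel' hq] at h
    omega
  · exact absurd (hmatch 0 hk) (hsmall (n - k) (by omega) (by omega)).ne

end NoSuffix

section Cases

variable {α β : ℝ} {b : ℕ → ℕ}

lemma set_last_mem_Lang_and_sWord_eq_nil (hβ : 3 < β) (hα : α = 1 / β)
    (hb : Tendsto (iSeq α β) (𝓝[<] (1 : ℝ)) (𝓝 b)) {y : ℝ} (hy : y ∈ Ico 0 1) {n : ℕ}
    (hn : 0 < n) (h3 : 3 ≤ iSeq α β y (n - 1)) :
    (pre (iSeq α β y) n).set (n - 1) (iSeq α β y (n - 1) - 1) ∈ Lang α β ∧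
      sWord (aSeq α β) b ((pre (iSeq α β y) n).set (n - 1) (iSeq α β y (n - 1) - 1)) = [] := by
  have hβ0 : 0 < β := by linarith
  have hβ1 : 1 < β := by linarith
  have hlam := iSeq_le_lamNat (α := α) hβ0 hy (n - 1)
  obtain ⟨x, hx, hX⟩ := exists_iSeq_eq_update hβ1 hα hy (j := n - 1) (c := iSeq α β y (n - 1) - 1)
    (by omega) (by omega)
  rw [← pre_update, ← hX]
  refine ⟨pre_iSeq_mem_Lang hx n, sWord_eq_nil ?_ ?_⟩
  · exact kk_aSeq_pre_eq_zero hβ1 hα (j := n - 1) (by omega) (by rw [hX, update_self]; omega)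
      fun i h1 h2 => by omega
  · refine kk_b_pre_eq_zero (alpha_mem_Ico hβ1 hα).1 hβ0 hb hy (j := n - 1) (by omega)
      (fun i hi => by rw [hX, update_of_ne hi.ne]) (by rw [hX, update_self]; omega)
      fun i h1 h2 => ?_
    rw [show i = n - 1 by omega, hX, update_self, b_zero hβ0 hb]
    omega

lemma set_set_mem_Lang_and_sWord_eq_nil (hβ : 3 < β) (hα : α = 1 / β)
    (hb : Tendsto (iSeq α β) (𝓝[<] (1 : ℝ)) (𝓝 b)) {y : ℝ} (hy : y ∈ Ico 0 1) {n j : ℕ}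
    (hjn : j + 1 < n) (hpos : 1 ≤ iSeq α β y j)
    (hside : iSeq α β y j = 1 → ¬ EndsInZeroOnes (iSeq α β y) j)
    (htail : ∀ i, j + 1 < i → i < n → iSeq α β y i ≠ 0 ∧ iSeq α β y i < lamNat α β) :
    ((pre (iSeq α β y) n).set j (iSeq α β y j - 1)).set (j + 1) (lamNat α β - 1) ∈ Lang α β ∧
      sWord (aSeq α β) b
        (((pre (iSeq α β y) n).set j (iSeq α β y j - 1)).set (j + 1) (lamNat α β - 1)) = [] := by
  have hβ0 : 0 < β := by linarith
  have hβ1 : 1 < β := by linarith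
  have hα1 := alpha_mem_Ico hβ1 hα
  have hlam3 := three_le_lamNat (α := α) (β := β) (by linarith [hα1.1])
  have hlam := iSeq_le_lamNat (α := α) hβ0 hy j
  obtain ⟨x, hx, hX⟩ := exists_iSeq_eq_update_update hβ1 hα hy (j := j)
    (c := iSeq α β y j - 1) (e := lamNat α β - 1) (by omega) (by omega) (by omega)
    fun h0 => hside (by omega)
  rw [← pre_update, ← pre_update, ← hX]
  refine ⟨pre_iSeq_mem_Lang hx n, sWord_eq_nil ?_ ?_⟩
  · refine kk_aSeq_pre_eq_zero hβ1 hα hjn (by rw [hX, update_self]; omega) fun i h1 h2 => ?_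
    rw [hX, update_of_ne (by omega), update_of_ne (by omega)]
    exact (htail i h1 h2).1
  · refine kk_b_pre_eq_zero hα1.1 hβ0 hb hy (j := j) (by omega)
      (fun i hi => by rw [hX, update_of_ne (by omega), update_of_ne hi.ne])
      (by rw [hX, update_of_ne (by omega), update_self]; omega) fun i h1 h2 => ?_
    rw [hX, b_zero hβ0 hb, update_apply, update_apply]
    split_ifs
    · omega
    · omega
    · exact (htail i (by omega) h2).2

end Cases

section MaximalSuffix

variable {α β : ℝ}

lemma kk_aSeq_pre_pos_of_endsInZeroOnes (hβ : 1 < β) (hα : α = 1 / β) {X : ℕ → ℕ} {n : ℕ}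
    (h : EndsInZeroOnes X n) : 0 < kk (aSeq α β) (pre X n) := by
  obtain ⟨m, hm, hm0, hrun⟩ := h
  have := le_kk_pre (s := aSeq α β) (k := n - m) (Nat.sub_le n m) fun i hi => by
    rw [Nat.sub_sub_self hm.le]
    rcases i with _ | i
    · rw [aSeq_zero hβ hα]; exact hm0
    · rw [aSeq_succ hβ hα]; exact hrun _ (by omega) (by omega)
  omega

lemma kk_aSeq_pre_add_two_le (hβ : 1 < β) (hα : α = 1 / β) {X : ℕ → ℕ} {l : ℕ} (hl : 2 ≤ l)
    (h0 : X 0 ≠ 0) : kk (aSeq α β) (pre X (l - 1)) + 2 ≤ l := by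
  have hle : kk (aSeq α β) (pre X (l - 1)) ≤ l - 1 := by
    simpa using kk_le (aSeq α β) (pre X (l - 1))
  by_contra hlt
  have h := kk_pre_spec (X := X) (s := aSeq α β) (n := l - 1) (i := 0) (by omega)
  rw [show l - 1 - kk (aSeq α β) (pre X (l - 1)) + 0 = 0 by omega, aSeq_zero hβ hα] at h
  exact h0 h

variable {y : ℝ} {l p : ℕ}

lemma iSeq_of_kk_aSeq_pre (hβ : 1 < β) (hα : α = 1 / β)
    (hp : kk (aSeq α β) (pre (iSeq α β y) (l - 1)) + p + 2 = l) {i : ℕ} (hi : p + 1 ≤ i)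
    (hil : i < l - 1) : iSeq α β y i = if i = p + 1 then 0 else 1 := by
  have h := kk_pre_spec (X := iSeq α β y) (s := aSeq α β) (n := l - 1) (i := i - (p + 1))
    (by omega)
  rw [show l - 1 - kk (aSeq α β) (pre (iSeq α β y) (l - 1)) + (i - (p + 1)) = i by omega] at h
  rw [h]
  split_ifs with hip
  · rw [hip, Nat.sub_self, aSeq_zero hβ hα]
  · rw [show i - (p + 1) = (i - (p + 2)) + 1 by omega, aSeq_succ hβ hα]

lemma not_endsInZeroOnes_of_kk_aSeq_pre (hβ : 1 < β) (hα : α = 1 / β) (hy : y ∈ Ico 0 1)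
    (hp : kk (aSeq α β) (pre (iSeq α β y) (l - 1)) + p + 2 = l) :
    ¬ EndsInZeroOnes (iSeq α β y) (p + 1) := by
  intro hends
  rcases Nat.eq_zero_or_pos (kk (aSeq α β) (pre (iSeq α β y) (l - 1))) with hk | hk
  · have := kk_aSeq_pre_pos_of_endsInZeroOnes hβ hα (show p + 1 = l - 1 by omega ▸ hends)
    omega
  · have h0 := iSeq_of_kk_aSeq_pre hβ hα hp le_rfl (by omega)
    rw [if_pos rfl] at h0
    exact iSeq_ne_zero_of_endsInZeroOnes hβ hα hy hends h0

lemma iSeq_ne_zero_and_le_two_of_kk_aSeq_pre (hβ : 1 < β) (hα : α = 1 / β) (hy : y ∈ Ico 0 1)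
    (hp : kk (aSeq α β) (pre (iSeq α β y) (l - 1)) + p + 2 = l)
    (hlast : iSeq α β y (l - 1) ≤ 2) {i : ℕ} (hpi : p + 1 < i) (hil : i < l) :
    iSeq α β y i ≠ 0 ∧ iSeq α β y i ≤ 2 := by
  by_cases hi : i < l - 1
  · have := iSeq_of_kk_aSeq_pre hβ hα hp hpi.le hi
    rw [if_neg hpi.ne'] at this
    omega
  · rw [show i = l - 1 by omega]
    refine ⟨iSeq_ne_zero_of_endsInZeroOnes hβ hα hy ⟨p + 1, by omega, ?_, fun m h1 h2 => ?_⟩,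
      hlast⟩
    · simpa using iSeq_of_kk_aSeq_pre hβ hα hp le_rfl (by omega)
    · simpa [h1.ne'] using iSeq_of_kk_aSeq_pre hβ hα hp h1.le h2

end MaximalSuffix

section Main

variable {α β : ℝ} {b : ℕ → ℕ}

lemma aSeq_zero_ne_b_zero (hβ : 3 < β) (hα : α = 1 / β)
    (hb : Tendsto (iSeq α β) (𝓝[<] (1 : ℝ)) (𝓝 b)) : aSeq α β 0 ≠ b 0 := by
  have := three_le_lamNat (α := α) (β := β) (by linarith [(alpha_mem_Ico (by linarith) hα).1])
  rw [aSeq_zero (by linarith) hα, b_zero (by linarith) hb]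
  omega

/-- Here `i(y)_q … i(y)_{q+l-1}` is `s(w) = b_0 … b_{l-1}`, and `q + p`, `q + p + 1` are the
positions changed by the second case of `hatP`. -/
lemma splice_conditions (hβ : 3 < β) (hα : α = 1 / β) {y : ℝ} (hy : y ∈ Ico 0 1) {q l p : ℕ}
    (h0 : 3 ≤ iSeq α β y q) (hlast : iSeq α β y (q + (l - 1)) ≤ 2)
    (hp : kk (aSeq α β) (pre (fun i => iSeq α β y (q + i)) (l - 1)) + p + 2 = l) :
    1 ≤ iSeq α β y (q + p) ∧
      (iSeq α β y (q + p) = 1 → ¬ EndsInZeroOnes (iSeq α β y) (q + p)) ∧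
      ∀ i, q + p + 1 < i → i < q + l →
        iSeq α β y i ≠ 0 ∧ iSeq α β y i < lamNat α β := by
  have hβ1 : 1 < β := by linarith
  have hlam := three_le_lamNat (α := α) (β := β) (by linarith [(alpha_mem_Ico hβ1 hα).1])
  have hshift : iSeq α β ((T α β)^[q] y) = fun i => iSeq α β y (q + i) :=
    funext (iSeq_iterate y q)
  have hy' := iterate_T_mem_Ico (α := α) (β := β) hy q
  rw [← hshift] at hp
  have hnot := not_endsInZeroOnes_of_kk_aSeq_pre hβ1 hα hy' hp
  rw [endsInZeroOnes_succ_iff, hshift, not_or, not_and] at hnot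
  refine ⟨Nat.one_le_iff_ne_zero.2 hnot.1, fun h1 hends => ?_, fun i h1 h2 => ?_⟩
  · rcases Nat.eq_zero_or_pos p with rfl | hp0
    · rw [add_zero] at h1; omega
    · exact hnot.2 h1 (endsInZeroOnes_shift (by omega) hp0 hends)
  · have := iSeq_ne_zero_and_le_two_of_kk_aSeq_pre hβ1 hα hy' hp (by rwa [iSeq_iterate])
      (i := i - q) (by omega) (by omega)
    rw [iSeq_iterate, Nat.add_sub_cancel' (by omega)] at this
    omega

lemma hatW_pre_mem_Lang_and_sWord_eq_nil_of_three_le (hβ : 3 < β) (hα : α = 1 / β)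
    (hb : Tendsto (iSeq α β) (𝓝[<] (1 : ℝ)) (𝓝 b)) {y : ℝ} (hy : y ∈ Ico 0 1) {n : ℕ}
    (hkk : kk (aSeq α β) (pre (iSeq α β y) n) < kk b (pre (iSeq α β y) n))
    (h3 : 3 ≤ b (kk b (pre (iSeq α β y) n) - 1)) :
    hatW (aSeq α β) b (lamNat α β) (pre (iSeq α β y) n) ∈ Lang α β ∧
      sWord (aSeq α β) b (hatW (aSeq α β) b (lamNat α β) (pre (iSeq α β y) n)) = [] := by
  have hl := kk_le b (pre (iSeq α β y) n)
  have hsuf := drop_kk b (pre (iSeq α β y) n)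
  have hmatch : ∀ i < kk b (pre (iSeq α β y) n),
      iSeq α β y (n - kk b (pre (iSeq α β y) n) + i) = b i := fun i hi => kk_pre_spec hi
  set l := kk b (pre (iSeq α β y) n)
  rw [length_pre] at hl hsuf
  have hlast : iSeq α β y (n - 1) = b (l - 1) := by
    rw [← hmatch (l - 1) (by omega), show n - l + (l - 1) = n - 1 by omega]
  rw [hatW_of_kk_lt hkk, length_pre, hatP_pre_of_three_le (aSeq_zero_ne_b_zero hβ hα hb)
    (by omega) h3, ← hsuf, take_append_set_drop, show n - l + (l - 1) = n - 1 by omega,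
    ← hlast]
  exact set_last_mem_Lang_and_sWord_eq_nil hβ hα hb hy (by omega) (hlast ▸ h3)

lemma hatW_pre_mem_Lang_and_sWord_eq_nil_of_lt_three (hβ : 3 < β) (hα : α = 1 / β)
    (hb : Tendsto (iSeq α β) (𝓝[<] (1 : ℝ)) (𝓝 b)) {y : ℝ} (hy : y ∈ Ico 0 1) {n : ℕ}
    (hkk : kk (aSeq α β) (pre (iSeq α β y) n) < kk b (pre (iSeq α β y) n))
    (h3 : b (kk b (pre (iSeq α β y) n) - 1) < 3) :
    hatW (aSeq α β) b (lamNat α β) (pre (iSeq α β y) n) ∈ Lang α β ∧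
      sWord (aSeq α β) b (hatW (aSeq α β) b (lamNat α β) (pre (iSeq α β y) n)) = [] := by
  have hab := aSeq_zero_ne_b_zero hβ hα hb
  have hl := kk_le b (pre (iSeq α β y) n)
  have hsuf := drop_kk b (pre (iSeq α β y) n)
  have hmatch : ∀ i < kk b (pre (iSeq α β y) n),
      iSeq α β y (n - kk b (pre (iSeq α β y) n) + i) = b i := fun i hi => kk_pre_spec hi
  set l := kk b (pre (iSeq α β y) n)
  rw [length_pre] at hl hsuf
  have hb0 : 3 ≤ b 0 := by
    rw [b_zero (by linarith) hb]
    exact three_le_lamNat (by linarith [(alpha_mem_Ico (by linarith) hα).1])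
  have hl2 : 2 ≤ l := by
    by_contra hl2
    rw [show l - 1 = 0 by omega] at h3
    omega
  have hpre : pre b (l - 1) = pre (fun i => iSeq α β y (n - l + i)) (l - 1) :=
    pre_eq_pre_iff.2 fun i hi => (hmatch i (by omega)).symm
  have hk := kk_aSeq_pre_add_two_le (X := b) (by linarith) hα hl2 (by omega)
  obtain ⟨p, hp⟩ : ∃ p, kk (aSeq α β) (pre b (l - 1)) + p + 2 = l :=
    ⟨l - kk (aSeq α β) (pre b (l - 1)) - 2, by omega⟩
  have hWp : iSeq α β y (n - l + p) = b p := hmatch p (by omega)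
  obtain ⟨hpos, hside, htail⟩ := splice_conditions hβ hα hy (q := n - l) (l := l) (p := p)
    (by rw [← add_zero (n - l), hmatch 0 (by omega)]; exact hb0)
    (by rw [hmatch _ (by omega)]; omega) (hpre ▸ hp)
  rw [hatW_of_kk_lt hkk, length_pre, hatP_pre_of_lt_three hab h3 hp, ← hsuf,
    take_append_set_set_drop, ← hWp]
  exact set_set_mem_Lang_and_sWord_eq_nil hβ hα hb hy (by omega) hpos hside
    fun i h1 h2 => htail i h1 (by omega)

end Main

/-- if `s(w) ∈ P^b ∖ {ε}` then `ŵ ∈ L^{α,β}` and `s(ŵ) = ε`. -/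
theorem stmt4 (α β : ℝ) (hβ : 3 < β) (hα : α = 1 / β)
    (b : ℕ → ℕ) (hb : Tendsto (iSeq α β) (𝓝[<] (1 : ℝ)) (𝓝 b))
    (w : List ℕ) (hw : w ∈ Lang α β)
    (hs : sWord (aSeq α β) b w ∈ Pset b) (hne : sWord (aSeq α β) b w ≠ []) :
    hatW (aSeq α β) b (lamNat α β) w ∈ Lang α β ∧
    sWord (aSeq α β) b (hatW (aSeq α β) b (lamNat α β) w) = [] := by
  obtain ⟨y, hy, hwy⟩ := exists_eq_pre_of_mem_Lang hw
  generalize w.length = n at hwy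
  subst hwy
  have hkk := kk_lt_kk_of_sWord_mem_Pset (aSeq_zero_ne_b_zero hβ hα hb) hs hne
  rcases le_or_gt 3 (b (kk b (pre (iSeq α β y) n) - 1)) with h3 | h3
  · exact hatW_pre_mem_Lang_and_sWord_eq_nil_of_three_le hβ hα hb hy hkk h3
  · exact hatW_pre_mem_Lang_and_sWord_eq_nil_of_lt_three hβ hα hb hy hkk h3

end AB
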